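/- arXiv:1308.1653 — 3 statements merged into one kernel-verified Lean document; each statement's English description precedes it below -/
import Mathlib

section
/- If G is a graph of order n with clique number ω(G) = ω, then q(G) ≤ 2(1 − 1/ω)·n, where q(G) is the signless Laplacian spectral radius. -/
open Matrix SimpleGraph Finset BigOperators

variable {V : Type*}

noncomputable def signlessLap (G : SimpleGraph V) [Fintype V] [DecidableEq V]
    [DecidableRel G.Adj] : Matrix V V ℝ :=
  Matrix.diagonal (fun v => (G.degree v : ℝ)) + G.adjMatrix ℝ

theorem signlessLap_isHermitian (G : SimpleGraph V) [Fintype V] [DecidableEq V]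
    [DecidableRel G.Adj] : (signlessLap G).IsHermitian := by
  unfold signlessLap
  apply Matrix.IsHermitian.add
  · exact Matrix.isHermitian_diagonal _
  · ext i j
    simp [Matrix.conjTranspose_apply, SimpleGraph.adjMatrix_apply, adj_comm]

noncomputable def qIndex (G : SimpleGraph V) [Fintype V] [DecidableEq V]
    [DecidableRel G.Adj] : ℝ :=
  ⨆ i, (signlessLap_isHermitian G).eigenvalues i

/-!
For a unit eigenvector `x` of `Q = D + A`, the entrywise nonnegativity of `Q` gives
`q ≤ |x|ᵀ Q |x|`, so we may assume `x ≥ 0`. Split `Q = 2A + L` with `L` the Laplacian. The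
Laplacian part is `∑_{uv ∈ E} (x_u - x_v)² ≤ n ‖x‖² - (∑ x)²`, and the Motzkin–Straus inequality
`xᵀ A x ≤ (1 - 1/ω) (∑ x)²` handles the adjacency part; it is proved by induction on the support
of `x`: moving the weight of a vertex `j` onto a non-adjacent vertex `i` with `(Ax)_j ≤ (Ax)_i`
does not decrease `xᵀ A x`, and once the support is a clique, Cauchy–Schwarz on it applies.
Altogether `q ≤ n ‖x‖² + (1 - 2/ω) (∑ x)²`, and `(∑ x)² ≤ n ‖x‖²` concludes when `ω ≥ 2`; when
`ω < 2` the graph is edgeless and `Q = 0`.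
-/

theorem Finset.sum_sum_sub_sq {ι R : Type*} [CommRing R] (s : Finset ι) (f : ι → R) :
    ∑ i ∈ s, ∑ j ∈ s, (f i - f j) ^ 2 = 2 * (#s * ∑ i ∈ s, f i ^ 2 - (∑ i ∈ s, f i) ^ 2) := by
  simp only [sub_sq, sum_add_distrib, sum_sub_distrib, sum_const, nsmul_eq_mul, ← mul_sum,
    ← sum_mul]
  ring

theorem Matrix.dotProduct_mulVec_le_abs {n R : Type*} [Fintype n] [CommRing R] [LinearOrder R]
    [IsStrictOrderedRing R] {M : Matrix n n R} (hM : ∀ i j, 0 ≤ M i j) (x y : n → R) :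
    x ⬝ᵥ M *ᵥ y ≤ |x| ⬝ᵥ M *ᵥ |y| := by
  simp only [dotProduct, mulVec, mul_sum]
  refine sum_le_sum fun i _ => sum_le_sum fun j _ => ?_
  calc x i * (M i j * y j) ≤ |x i * (M i j * y j)| := le_abs_self _
    _ = |x i| * (M i j * |y j|) := by simp [abs_mul, abs_of_nonneg (hM i j)]

theorem Matrix.IsHermitian.eigenvalues_le_of_forall_dotProduct_mulVec_le {n : Type*} [Fintype n]
    [DecidableEq n] {A : Matrix n n ℝ} (hA : A.IsHermitian) {c : ℝ}
    (h : ∀ x : n → ℝ, x ⬝ᵥ A *ᵥ x ≤ c * (x ⬝ᵥ x)) (i : n) : hA.eigenvalues i ≤ c := by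
  have hunit : ⇑(hA.eigenvectorBasis i) ⬝ᵥ ⇑(hA.eigenvectorBasis i) = 1 := by
    have h1 : inner ℝ (hA.eigenvectorBasis i) (hA.eigenvectorBasis i) = 1 := by
      rw [real_inner_self_eq_norm_sq, hA.eigenvectorBasis.orthonormal.1 i, one_pow]
    rwa [EuclideanSpace.inner_eq_star_dotProduct, star_trivial] at h1
  simpa [hA.eigenvalues_eq i, hunit] using h (hA.eigenvectorBasis i)

namespace SimpleGraph

variable (G : SimpleGraph V)

theorem one_sub_one_div_cliqueNum_nonneg : (0 : ℝ) ≤ 1 - 1 / G.cliqueNum := by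
  rw [one_div, sub_nonneg]
  exact Nat.cast_inv_le_one _

variable [Fintype V]

theorem eq_bot_of_cliqueNum_lt_two (h : G.cliqueNum < 2) : G = ⊥ := by
  rw [← cliqueFree_two]
  intro s hs
  have := hs.card_eq ▸ IsClique.card_le_cliqueNum (tc := hs.isClique)
  omega

theorem sq_sum_le_cliqueNum_mul_sum_sq {x : V → ℝ} (hx : G.IsClique ({v | x v ≠ 0} : Finset V)) :
    (∑ v, x v) ^ 2 ≤ G.cliqueNum * ∑ v, x v ^ 2 := by
  set s : Finset V := {v | x v ≠ 0}
  calc (∑ v, x v) ^ 2 = (∑ v ∈ s, x v) ^ 2 := by rw [sum_filter_ne_zero]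
    _ ≤ #s * ∑ v ∈ s, x v ^ 2 := sq_sum_le_card_mul_sum_sq
    _ ≤ G.cliqueNum * ∑ v, x v ^ 2 :=
        mul_le_mul (mod_cast IsClique.card_le_cliqueNum (tc := hx))
          (sum_le_sum_of_subset_of_nonneg (subset_univ s) fun v _ _ => sq_nonneg _)
          (sum_nonneg fun v _ => sq_nonneg _) (Nat.cast_nonneg _)

variable [DecidableRel G.Adj]

theorem dotProduct_adjMatrix_mulVec_comm (y z : V → ℝ) :
    y ⬝ᵥ G.adjMatrix ℝ *ᵥ z = z ⬝ᵥ G.adjMatrix ℝ *ᵥ y := by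
  rw [dotProduct_mulVec, ← vecMul_transpose, transpose_adjMatrix, dotProduct_comm]

theorem dotProduct_adjMatrix_mulVec_le_sq_sum_sub_sum_sq {x : V → ℝ} (hx : 0 ≤ x) :
    x ⬝ᵥ G.adjMatrix ℝ *ᵥ x ≤ (∑ v, x v) ^ 2 - ∑ v, x v ^ 2 := by
  classical
  have hterm (u v : V) :
      (if G.Adj u v then x u * x v else 0) ≤ x u * x v - if u = v then x u ^ 2 else 0 := by
    by_cases huv : u = v
    · subst huv; simp [sq]
    · have := mul_nonneg (hx u) (hx v)
      split_ifs <;> simp_all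
  calc x ⬝ᵥ G.adjMatrix ℝ *ᵥ x
      ≤ ∑ u, ∑ v, (x u * x v - if u = v then x u ^ 2 else 0) := by
        rw [dotProduct_mulVec_adjMatrix]
        exact sum_le_sum fun u _ => sum_le_sum fun v _ => hterm u v
    _ = (∑ v, x v) ^ 2 - ∑ v, x v ^ 2 := by
        simp only [sum_sub_distrib, sum_ite_eq, mem_univ, if_true, sq, sum_mul_sum]

theorem dotProduct_adjMatrix_mulVec_le_of_isClique {x : V → ℝ} (hx : 0 ≤ x)
    (hc : G.IsClique ({v | x v ≠ 0} : Finset V)) :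
    x ⬝ᵥ G.adjMatrix ℝ *ᵥ x ≤ (1 - 1 / G.cliqueNum) * (∑ v, x v) ^ 2 := by
  have hS : (∑ v, x v) ^ 2 / G.cliqueNum ≤ ∑ v, x v ^ 2 :=
    div_le_of_le_mul₀ (Nat.cast_nonneg _) (sum_nonneg fun v _ => sq_nonneg _)
      (by linarith [G.sq_sum_le_cliqueNum_mul_sum_sq hc])
  calc x ⬝ᵥ G.adjMatrix ℝ *ᵥ x ≤ (∑ v, x v) ^ 2 - ∑ v, x v ^ 2 :=
        G.dotProduct_adjMatrix_mulVec_le_sq_sum_sub_sum_sq hx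
    _ ≤ (1 - 1 / G.cliqueNum) * (∑ v, x v) ^ 2 := by
        rw [sub_mul, one_mul, one_div_mul_eq_div]
        linarith

theorem dotProduct_adjMatrix_mulVec_add_single_sub_single [DecidableEq V] (x : V → ℝ) {i j : V}
    (hadj : ¬ G.Adj i j) :
    (x + (Pi.single i (x j) - Pi.single j (x j))) ⬝ᵥ
        G.adjMatrix ℝ *ᵥ (x + (Pi.single i (x j) - Pi.single j (x j))) =
      x ⬝ᵥ G.adjMatrix ℝ *ᵥ x + 2 * x j * ((G.adjMatrix ℝ *ᵥ x) i - (G.adjMatrix ℝ *ᵥ x) j) := by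
  set d : V → ℝ := Pi.single i (x j) - Pi.single j (x j)
  have hd (w : V → ℝ) : d ⬝ᵥ w = x j * (w i - w j) := by
    simp only [d, sub_dotProduct, single_dotProduct, mul_sub]
  have hdd : d ⬝ᵥ G.adjMatrix ℝ *ᵥ d = 0 := by
    rw [hd]
    simp [d, hadj, G.adj_comm j i]
  rw [mulVec_add, dotProduct_add, add_dotProduct, add_dotProduct,
    G.dotProduct_adjMatrix_mulVec_comm x d, hdd, hd]
  ring

theorem exists_support_card_lt_dotProduct_adjMatrix_mulVec_le {x : V → ℝ} (hx : 0 ≤ x) {i j : V}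
    (hij : i ≠ j) (hadj : ¬ G.Adj i j) (hi : x i ≠ 0) (hj : x j ≠ 0) :
    ∃ y : V → ℝ, 0 ≤ y ∧ ∑ v, y v = ∑ v, x v ∧ #{v | y v ≠ 0} < #{v | x v ≠ 0} ∧
      x ⬝ᵥ G.adjMatrix ℝ *ᵥ x ≤ y ⬝ᵥ G.adjMatrix ℝ *ᵥ y := by
  classical
  wlog hle : (G.adjMatrix ℝ *ᵥ x) j ≤ (G.adjMatrix ℝ *ᵥ x) i generalizing i j
  · exact this hij.symm (fun h => hadj h.symm) hj hi (le_of_not_ge hle)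
  set y := x + (Pi.single i (x j) - Pi.single j (x j))
  have hy (v : V) : y v = if v = j then 0 else if v = i then x i + x j else x v := by
    by_cases hvj : v = j
    · subst hvj; simp [y, hij.symm]
    · by_cases hvi : v = i
      · subst hvi; simp [y, hvj]
      · simp [y, hvi, hvj]
  refine ⟨y, fun v => ?_, ?_, ?_, ?_⟩
  · rw [hy]
    split_ifs
    exacts [le_rfl, add_nonneg (hx i) (hx j), hx v]
  · simp [y, sum_add_distrib, sum_sub_distrib]
  · refine (card_le_card fun v hv => ?_).trans_lt (card_erase_lt_of_mem (by simpa using hj))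
    simp only [mem_filter, mem_univ, true_and, hy] at hv
    simp only [mem_erase, mem_filter, mem_univ, true_and]
    split_ifs at hv with hvj hvi
    · exact absurd rfl hv
    · exact ⟨hvj, hvi ▸ hi⟩
    · exact ⟨hvj, hv⟩
  · rw [G.dotProduct_adjMatrix_mulVec_add_single_sub_single x hadj]
    have := mul_nonneg (hx j) (sub_nonneg.mpr hle)
    linarith

theorem dotProduct_adjMatrix_mulVec_le_cliqueNum {x : V → ℝ} (hx : 0 ≤ x) :
    x ⬝ᵥ G.adjMatrix ℝ *ᵥ x ≤ (1 - 1 / G.cliqueNum) * (∑ v, x v) ^ 2 := by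
  induction h : #{v | x v ≠ 0} using Nat.strong_induction_on generalizing x with
  | _ k ih =>
  by_cases hc : G.IsClique ({v | x v ≠ 0} : Finset V)
  · exact G.dotProduct_adjMatrix_mulVec_le_of_isClique hx hc
  · obtain ⟨i, hi, j, hj, hij, hadj⟩ :
        ∃ i, x i ≠ 0 ∧ ∃ j, x j ≠ 0 ∧ i ≠ j ∧ ¬ G.Adj i j := by
      simpa [IsClique, Set.Pairwise] using hc
    obtain ⟨y, hy, hsum, hcard, hle⟩ :=
      G.exists_support_card_lt_dotProduct_adjMatrix_mulVec_le hx hij hadj hi hj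
    calc x ⬝ᵥ G.adjMatrix ℝ *ᵥ x ≤ y ⬝ᵥ G.adjMatrix ℝ *ᵥ y := hle
      _ ≤ (1 - 1 / G.cliqueNum) * (∑ v, x v) ^ 2 := hsum ▸ ih _ (h ▸ hcard) hy rfl

theorem dotProduct_lapMatrix_mulVec_le [DecidableEq V] (x : V → ℝ) :
    x ⬝ᵥ G.lapMatrix ℝ *ᵥ x ≤ Fintype.card V * ∑ v, x v ^ 2 - (∑ v, x v) ^ 2 := by
  rw [← toLinearMap₂'_apply', lapMatrix_toLinearMap₂']
  calc (∑ u, ∑ v, if G.Adj u v then (x u - x v) ^ 2 else 0) / 2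
      ≤ (∑ u, ∑ v, (x u - x v) ^ 2) / 2 := by
        gcongr with u _ v _
        split_ifs
        exacts [le_rfl, sq_nonneg _]
    _ = Fintype.card V * ∑ v, x v ^ 2 - (∑ v, x v) ^ 2 := by
        rw [sum_sum_sub_sq, card_univ]
        ring

theorem signlessLap_eq_two_smul_adjMatrix_add_lapMatrix [DecidableEq V] :
    signlessLap G = (2 : ℝ) • G.adjMatrix ℝ + G.lapMatrix ℝ := by
  rw [signlessLap, lapMatrix, degMatrix, two_smul]
  abel

theorem signlessLap_eq_zero_of_cliqueNum_lt_two [DecidableEq V] (h : G.cliqueNum < 2) :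
    signlessLap G = 0 := by
  have hG := G.eq_bot_of_cliqueNum_lt_two h
  ext u v
  simp [signlessLap, hG]

theorem signlessLap_apply_nonneg [DecidableEq V] (u v : V) : 0 ≤ signlessLap G u v := by
  rw [signlessLap, Matrix.add_apply, diagonal_apply, adjMatrix_apply]
  split_ifs <;> positivity

theorem dotProduct_signlessLap_mulVec_le [DecidableEq V] (x : V → ℝ) :
    x ⬝ᵥ signlessLap G *ᵥ x ≤ 2 * (1 - 1 / G.cliqueNum) * Fintype.card V * (x ⬝ᵥ x) := by
  rcases lt_or_ge G.cliqueNum 2 with hlt | hge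
  · rw [G.signlessLap_eq_zero_of_cliqueNum_lt_two hlt, zero_mulVec, dotProduct_zero]
    have := G.one_sub_one_div_cliqueNum_nonneg
    have : 0 ≤ x ⬝ᵥ x := sum_nonneg fun v _ => mul_self_nonneg (x v)
    positivity
  set y := |x|
  have hyy : ∑ v, y v ^ 2 = x ⬝ᵥ x := by simp [y, dotProduct, sq]
  have hA := G.dotProduct_adjMatrix_mulVec_le_cliqueNum (abs_nonneg x)
  have hL := G.dotProduct_lapMatrix_mulVec_le y
  have hCS : (∑ v, y v) ^ 2 ≤ Fintype.card V * ∑ v, y v ^ 2 := by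
    simpa using sq_sum_le_card_mul_sum_sq (s := univ) (f := y)
  have hinv : 1 / (G.cliqueNum : ℝ) ≤ 1 / 2 := by gcongr; exact_mod_cast hge
  have hCS' := mul_le_mul_of_nonneg_left hCS (by linarith : 0 ≤ 1 - 2 * (1 / (G.cliqueNum : ℝ)))
  calc x ⬝ᵥ signlessLap G *ᵥ x ≤ y ⬝ᵥ signlessLap G *ᵥ y :=
        dotProduct_mulVec_le_abs G.signlessLap_apply_nonneg x x
    _ = 2 * (y ⬝ᵥ G.adjMatrix ℝ *ᵥ y) + y ⬝ᵥ G.lapMatrix ℝ *ᵥ y := by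
        rw [signlessLap_eq_two_smul_adjMatrix_add_lapMatrix, add_mulVec, smul_mulVec,
          dotProduct_add, dotProduct_smul, smul_eq_mul]
    _ ≤ 2 * (1 - 1 / G.cliqueNum) * Fintype.card V * (x ⬝ᵥ x) := by
        rw [← hyy]
        linarith

end SimpleGraph

theorem stmt6_general (G : SimpleGraph V) [Fintype V] [DecidableEq V] [DecidableRel G.Adj] :
    qIndex G ≤ 2 * (1 - 1 / (G.cliqueNum : ℝ)) * (Fintype.card V : ℝ) := by
  unfold qIndex
  exact Real.iSup_le
    ((signlessLap_isHermitian G).eigenvalues_le_of_forall_dotProduct_mulVec_le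
      G.dotProduct_signlessLap_mulVec_le)
    (by have := G.one_sub_one_div_cliqueNum_nonneg; positivity)

theorem stmt6 (G : SimpleGraph V) [Fintype V] [DecidableEq V] [DecidableRel G.Adj]
    [Nonempty V] :
    qIndex G ≤ 2 * (1 - 1 / (G.cliqueNum : ℝ)) * (Fintype.card V : ℝ) :=
  stmt6_general G
end

section
/- If G is a graph of order n with chromatic number χ, then q(G) ≤ 2(1 − 1/χ)·n. -/
open Matrix SimpleGraph Finset BigOperators

variable {V : Type*}

/-!
A proper `χ`-colouring puts `G` inside the complete multipartite graph `K` whose parts are the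
colour classes, and the signless-Laplacian form `∑_{uv ∈ E} (x u + x v)²` only grows when edges
are added, so it suffices to bound the form of `K` on unit vectors. With `m j`, `t j`, `s j` the
size of class `j` and the sums of `x²` and of `x` over it, and `S = ∑ x`, this form equals
`n + S² - ∑ m j t j - ∑ (s j)²`, so the claim becomes
`S² ≤ (1 - 2/χ) n + ∑ m j t j + ∑ (s j)²`. That is Cauchy–Schwarz for `∑ s j`, with weights
chosen through a tangent-line estimate so that one of the two factors is exactly `1`.
-/

/-- `2b² + (1 - 2b) t` is the tangent line at `t = b` of the concave map `t ↦ t / (1 - 2b + 2t)`. -/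
lemma sq_le_mul_tangent_line {b m t s : ℝ} (hb : 2 * b ≤ 1) (hm : 0 ≤ m) (ht : 0 ≤ t)
    (hst : s ^ 2 ≤ m * t) :
    s ^ 2 ≤ ((1 - 2 * b) * m + m * t + s ^ 2) * (2 * b ^ 2 + (1 - 2 * b) * t) := by
  set p := 2 * b ^ 2 + (1 - 2 * b) * t
  have hc : 0 ≤ 1 - 2 * b := by linarith
  have tangent : (1 - 2 * b + 2 * t) * p - t = 2 * (1 - 2 * b) * (b - t) ^ 2 := by ring
  rcases le_total p 1 with hp1 | hp1
  · nlinarith [mul_le_mul_of_nonneg_right hst (sub_nonneg.2 hp1),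
      mul_nonneg hm (mul_nonneg hc (sq_nonneg (b - t)))]
  · have hp : 0 ≤ p := by positivity
    nlinarith [mul_nonneg (mul_nonneg hm (add_nonneg hc ht)) hp, sq_nonneg s]

theorem sq_sum_le_of_sq_le_mul {ι : Type*} [Fintype ι] (hι : 2 ≤ Fintype.card ι)
    {m t s : ι → ℝ} (hm : ∀ i, 0 ≤ m i) (ht : ∀ i, 0 ≤ t i) (hst : ∀ i, s i ^ 2 ≤ m i * t i)
    (htsum : ∑ i, t i = 1) :
    (∑ i, s i) ^ 2 ≤
      (1 - 2 / Fintype.card ι) * ∑ i, m i + ∑ i, m i * t i + ∑ i, s i ^ 2 := by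
  set b : ℝ := 1 / Fintype.card ι with hb
  have hk : (2 : ℝ) ≤ Fintype.card ι := by exact_mod_cast hι
  have hb2 : 2 * b ≤ 1 := by rwa [hb, mul_one_div, div_le_one (by linarith)]
  have hweight : ∑ i, (2 * b ^ 2 + (1 - 2 * b) * t i) = 1 := by
    rw [sum_add_distrib, ← mul_sum (f := t), htsum, sum_const, card_univ, nsmul_eq_mul, hb]
    field_simp
    ring
  calc (∑ i, s i) ^ 2
      ≤ (∑ i, ((1 - 2 * b) * m i + m i * t i + s i ^ 2)) *
          ∑ i, (2 * b ^ 2 + (1 - 2 * b) * t i) :=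
        sum_sq_le_sum_mul_sum_of_sq_le_mul _
          (fun i _ => by have := hm i; have := ht i; nlinarith)
          (fun i _ => by have := ht i; positivity)
          (fun i _ => sq_le_mul_tangent_line hb2 (hm i) (ht i) (hst i))
    _ = _ := by
      rw [hweight, mul_one, sum_add_distrib, sum_add_distrib, ← mul_sum, hb]
      ring

theorem sum_sum_add_sq (s : Finset V) (x : V → ℝ) :
    ∑ v ∈ s, ∑ u ∈ s, (x v + x u) ^ 2 = 2 * #s * ∑ v ∈ s, x v ^ 2 + 2 * (∑ v ∈ s, x v) ^ 2 := by
  rw [sq (∑ v ∈ s, x v), sum_mul_sum]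
  simp only [add_sq, sum_add_distrib, sum_const, nsmul_eq_mul, mul_assoc, ← mul_sum, ← sum_mul]
  ring

theorem sum_sum_ite_eq_sum_fiber [Fintype V] {α : Type*} [Fintype α] [DecidableEq α]
    (f : V → α) (g : V → V → ℝ) :
    ∑ v, ∑ u, (if f v = f u then g v u else 0) =
      ∑ j, ∑ v ∈ {v | f v = j}, ∑ u ∈ {u | f u = j}, g v u := by
  rw [← sum_fiberwise univ f]
  refine sum_congr rfl fun j _ => sum_congr rfl fun v hv => ?_
  rw [(mem_filter.1 hv).2, sum_filter]
  exact sum_congr rfl fun u _ => if_congr eq_comm rfl rfl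

/-- The left side is twice the signless-Laplacian form of the complete multipartite graph whose
parts are the fibres of `f`. -/
theorem sum_sum_ne_sq_add_le [Fintype V] {α : Type*} [Fintype α] [DecidableEq α] (f : V → α)
    {x : V → ℝ} (hx : x ⬝ᵥ x = 1) :
    ∑ v, ∑ u, (if f v ≠ f u then (x v + x u) ^ 2 else 0) ≤
      4 * (1 - 1 / Fintype.card α) * Fintype.card V := by
  rcases le_or_gt (Fintype.card α) 1 with hα | hα
  · have hk : (1 : ℝ) / Fintype.card α ≤ 1 := by
      simpa using Nat.cast_inv_le_one (Fintype.card α)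
    have : Subsingleton α := Fintype.card_le_one_iff_subsingleton.1 hα
    rw [sum_eq_zero fun v _ => sum_eq_zero fun u _ => if_neg (not_not.2 (Subsingleton.elim _ _))]
    exact mul_nonneg (by linarith) (Nat.cast_nonneg _)
  set F : α → Finset V := fun j => {v | f v = j}
  have hx' : ∑ v, x v ^ 2 = 1 := by simpa [dotProduct, sq] using hx
  have hsplit : ∑ v, ∑ u, (if f v ≠ f u then (x v + x u) ^ 2 else 0) =
      ∑ v, ∑ u, (x v + x u) ^ 2 - ∑ j, ∑ v ∈ F j, ∑ u ∈ F j, (x v + x u) ^ 2 := by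
    rw [← sum_sum_ite_eq_sum_fiber, ← sum_sub_distrib]
    refine sum_congr rfl fun v _ => ?_
    rw [← sum_sub_distrib]
    refine sum_congr rfl fun u _ => ?_
    split_ifs <;> simp_all
  have hcore := sq_sum_le_of_sq_le_mul hα (m := fun j => (#(F j) : ℝ))
    (t := fun j => ∑ v ∈ F j, x v ^ 2) (s := fun j => ∑ v ∈ F j, x v)
    (fun j => Nat.cast_nonneg _) (fun j => sum_nonneg fun v _ => sq_nonneg _)
    (fun j => sq_sum_le_card_mul_sum_sq) (by rw [sum_fiberwise univ f, hx'])
  have hS : ∑ j, ∑ v ∈ F j, x v = ∑ v, x v := sum_fiberwise univ f x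
  have hn : ∑ j, (#(F j) : ℝ) = Fintype.card V := by
    simpa using (sum_fiberwise univ f fun _ => (1 : ℝ))
  rw [hS, hn] at hcore
  rw [hsplit]
  simp only [sum_sum_add_sq, sum_add_distrib, mul_assoc, ← mul_sum, hx', card_univ]
  linear_combination 2 * hcore

theorem dotProduct_signlessLap_mulVec [Fintype V] [DecidableEq V] (G : SimpleGraph V)
    [DecidableRel G.Adj] (x : V → ℝ) :
    x ⬝ᵥ (signlessLap G *ᵥ x) = (∑ v, ∑ u, if G.Adj v u then (x v + x u) ^ 2 else 0) / 2 := by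
  have half : x ⬝ᵥ (signlessLap G *ᵥ x) =
      ∑ v, ∑ u, if G.Adj v u then x v ^ 2 + x v * x u else 0 := by
    rw [show signlessLap G = G.degMatrix ℝ + G.adjMatrix ℝ from rfl, add_mulVec, dotProduct_add,
      dotProduct_mulVec_degMatrix, dotProduct_mulVec_adjMatrix, ← sum_add_distrib]
    simp_rw [degree_eq_sum_if_adj, sum_mul, ← sum_add_distrib]
    congr! 2 with v _ u
    split_ifs <;> ring
  have swap : (∑ v, ∑ u, if G.Adj v u then x v ^ 2 + x v * x u else 0) =
      ∑ v, ∑ u, if G.Adj v u then x u ^ 2 + x u * x v else 0 := by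
    rw [sum_comm]
    exact sum_congr rfl fun u _ => sum_congr rfl fun v _ => if_congr (G.adj_comm v u) rfl rfl
  rw [eq_div_iff two_ne_zero, mul_two]
  nth_rw 1 [half]
  rw [half.trans swap, ← sum_add_distrib]
  simp_rw [← sum_add_distrib, ite_add_ite, add_zero]
  congr! 3 with v _ u
  ring

theorem SimpleGraph.Coloring.sum_sum_adj_le_sum_sum_ne [Fintype V] {G : SimpleGraph V}
    [DecidableRel G.Adj] {α : Type*} [DecidableEq α] (C : G.Coloring α) {g : V → V → ℝ}
    (hg : ∀ v u, 0 ≤ g v u) :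
    ∑ v, ∑ u, (if G.Adj v u then g v u else 0) ≤ ∑ v, ∑ u, (if C v ≠ C u then g v u else 0) := by
  gcongr with v _ u _
  split_ifs with hadj hne hne
  · exact le_rfl
  · exact absurd (C.valid hadj) hne
  · exact hg v u
  · exact le_rfl

theorem Matrix.IsHermitian.eigenvalues_le_of_dotProduct_mulVec_le {n : Type*} [Fintype n]
    [DecidableEq n] {A : Matrix n n ℝ} (hA : A.IsHermitian) {b : ℝ}
    (h : ∀ x : n → ℝ, x ⬝ᵥ x = 1 → x ⬝ᵥ (A *ᵥ x) ≤ b) (i : n) : hA.eigenvalues i ≤ b := by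
  have hunit : ⇑(hA.eigenvectorBasis i) ⬝ᵥ ⇑(hA.eigenvectorBasis i) = 1 := by
    have := real_inner_self_eq_norm_sq (hA.eigenvectorBasis i)
    rw [hA.eigenvectorBasis.orthonormal.1 i, EuclideanSpace.inner_eq_star_dotProduct] at this
    simpa using this
  simpa [hA.eigenvalues_eq] using h _ hunit

theorem stmt15 (G : SimpleGraph V) [Fintype V] [DecidableEq V] [DecidableRel G.Adj]
    (χ : ℕ) (hχ : G.chromaticNumber = (χ : ℕ∞)) :
    qIndex G ≤ 2 * (1 - 1 / (χ : ℝ)) * (Fintype.card V : ℝ) := by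
  obtain ⟨C⟩ : G.Colorable χ := chromaticNumber_le_iff_colorable.mp hχ.le
  have hχinv : 1 / (χ : ℝ) ≤ 1 := by simpa using Nat.cast_inv_le_one χ
  refine Real.iSup_le (fun i => ?_) (mul_nonneg (by linarith) (Nat.cast_nonneg _))
  refine (signlessLap_isHermitian G).eigenvalues_le_of_dotProduct_mulVec_le (fun x hx => ?_) i
  have hG := C.sum_sum_adj_le_sum_sum_ne fun v u => sq_nonneg (x v + x u)
  have hK := sum_sum_ne_sq_add_le C hx
  rw [Fintype.card_fin] at hK
  rw [dotProduct_signlessLap_mulVec]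
  linarith
end

section
/- If G is a complete bipartite graph K_{a,b} with a + b = n, then q(G) = n; conversely, among triangle-free graphs of order n, q(G) = n holds if and only if G is a complete bipartite graph (with both parts nonempty). -/
open Matrix SimpleGraph Finset BigOperators

variable {V : Type*}

/-!
For an edge `uv` of a triangle-free graph the neighbourhoods of `u` and `v` are disjoint, so
`d u + d v ≤ n`. Writing `xᵀ Q x = ½ ∑_{i ~ j} (x i + x j)²` and applying Cauchy–Schwarz in the form
`(a + b)² ≤ (s + t)(a²/s + b²/t)` with `s = d i`, `t = d j` to every edge gives
`xᵀ Q x + ½ ∑_{i ~ j} (n - d i - d j)(x i²/d i + x j²/d j) ≤ n ‖x‖²`, whence `q ≤ n`.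
If `q = n`, an eigenvector `x` attains equality, so every edge `uv` with `x u ≠ 0` has
`d u + d v = n`, i.e. `N(v)` is the complement of `N(u)`. Such a `u` is not isolated (otherwise
`(Q x) u = 0 ≠ n x u`), and then `N(u)` and its complement are the two sides of a complete
bipartite graph. Conversely the vector equal to `|sᶜ|` on `s` and to `|s|` on `sᶜ` is an
eigenvector of `Q(K_{s,sᶜ})` for the eigenvalue `n`.
-/

section TriangleFree

variable {G : SimpleGraph V} [Fintype V] [DecidableRel G.Adj]

theorem SimpleGraph.CliqueFree.disjoint_neighborFinset (h3 : G.CliqueFree 3) {u v : V}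
    (huv : G.Adj u v) : Disjoint (G.neighborFinset u) (G.neighborFinset v) := by
  refine Finset.disjoint_left.mpr fun w hu hv => ?_
  rw [mem_neighborFinset] at hu hv
  exact isIndepSet_neighborSet_of_triangleFree _ h3 w hu.symm hv.symm (G.ne_of_adj huv) huv

theorem SimpleGraph.CliqueFree.degree_add_degree_le_card (h3 : G.CliqueFree 3) {u v : V}
    (huv : G.Adj u v) : G.degree u + G.degree v ≤ Fintype.card V := by
  classical
  rw [← card_neighborFinset_eq_degree, ← card_neighborFinset_eq_degree,
    ← card_union_of_disjoint (h3.disjoint_neighborFinset huv)]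
  exact card_le_univ _

theorem SimpleGraph.CliqueFree.card_sub_degree_add_mul_nonneg (h3 : G.CliqueFree 3)
    (x : V → ℝ) {i j : V} (hij : G.Adj i j) :
    0 ≤ (Fintype.card V - (G.degree i + G.degree j) : ℝ) *
      (x i ^ 2 / G.degree i + x j ^ 2 / G.degree j) :=
  mul_nonneg (sub_nonneg.mpr (by exact_mod_cast h3.degree_add_degree_le_card hij)) (by positivity)

theorem SimpleGraph.CliqueFree.neighborFinset_eq_compl [DecidableEq V] (h3 : G.CliqueFree 3)
    {u v : V} (huv : G.Adj u v) (hdeg : G.degree u + G.degree v = Fintype.card V) :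
    G.neighborFinset v = (G.neighborFinset u)ᶜ := by
  refine eq_of_subset_of_card_le
    (subset_compl_iff_disjoint_left.mpr (h3.disjoint_neighborFinset huv)) ?_
  rw [card_compl, card_neighborFinset_eq_degree, card_neighborFinset_eq_degree]
  omega

theorem SimpleGraph.CliqueFree.exists_completeBipartite [DecidableEq V] (h3 : G.CliqueFree 3)
    {u v : V} (huv : G.Adj u v)
    (hdeg : ∀ w, G.Adj u w → G.degree u + G.degree w = Fintype.card V) :
    ∃ s : Finset V, s.Nonempty ∧ sᶜ.Nonempty ∧
      ∀ a b : V, G.Adj a b ↔ ((a ∈ s ∧ b ∉ s) ∨ (a ∉ s ∧ b ∈ s)) := by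
  have hN : ∀ w, G.Adj u w → ∀ x, G.Adj w x ↔ ¬G.Adj u x := fun w huw x => by
    simpa using congrArg (x ∈ ·) (h3.neighborFinset_eq_compl huw (hdeg w huw))
  refine ⟨G.neighborFinset u, ⟨v, by simpa⟩, ⟨u, by simp⟩, fun a b => ?_⟩
  simp only [mem_neighborFinset]
  by_cases ha : G.Adj u a
  · simpa [ha] using hN a ha b
  by_cases hb : G.Adj u b
  · simpa [ha, hb, adj_comm] using hN b hb a
  have hva : G.Adj v a := (hN v huv a).mpr ha
  have hvb : G.Adj v b := (hN v huv b).mpr hb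
  simp only [ha, hb, false_and, and_false, or_self, iff_false]
  exact fun hab => isIndepSet_neighborSet_of_triangleFree _ h3 v hva hvb (G.ne_of_adj hab) hab

end TriangleFree

theorem sq_add_le_mul_add_div {a b s t : ℝ} (hs : 0 < s) (ht : 0 < t) :
    (a + b) ^ 2 ≤ (s + t) * (a ^ 2 / s + b ^ 2 / t) := by
  have key : (s + t) * (a ^ 2 / s + b ^ 2 / t) - (a + b) ^ 2 = (t * a - s * b) ^ 2 / (s * t) := by
    field_simp
    ring
  rw [← sub_nonneg, key]
  positivity

theorem Matrix.mem_spectrum_iff_exists_mulVec_eq_smul {K n : Type*} [Field K] [Fintype n]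
    [DecidableEq n] {A : Matrix n n K} {μ : K} :
    μ ∈ spectrum K A ↔ ∃ x ≠ 0, A *ᵥ x = μ • x := by
  rw [← spectrum_toLin', ← Module.End.hasEigenvalue_iff_mem_spectrum,
    Module.End.hasEigenvalue_iff, Submodule.ne_bot_iff]
  simp only [Module.End.mem_eigenspace_iff, toLin'_apply]
  exact exists_congr fun x => and_comm

section Defect

variable (G : SimpleGraph V) [Fintype V] [DecidableRel G.Adj]

theorem sum_neighborFinset_comm {M : Type*} [AddCommMonoid M] (f : V → V → M) :
    ∑ i, ∑ j ∈ G.neighborFinset i, f i j = ∑ i, ∑ j ∈ G.neighborFinset i, f j i :=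
  Finset.sum_comm' fun i j => by simp [adj_comm]

theorem sum_neighborFinset_sq_div_degree_le (x : V → ℝ) :
    ∑ i, ∑ j ∈ G.neighborFinset i, (x i ^ 2 / G.degree i + x j ^ 2 / G.degree j) ≤
      2 * (x ⬝ᵥ x) := by
  rw [sum_congr rfl fun i _ => sum_add_distrib, sum_add_distrib,
    sum_neighborFinset_comm G fun i j => x j ^ 2 / G.degree j, ← two_mul]
  simp only [sum_const, card_neighborFinset_eq_degree, nsmul_eq_mul, dotProduct, ← sq]
  gcongr with i
  rcases eq_or_ne (G.degree i) 0 with h | h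
  · simp [h, sq_nonneg]
  · rw [mul_div_cancel₀ _ (Nat.cast_ne_zero.mpr h)]

noncomputable def degreeSumDefect (x : V → ℝ) : ℝ :=
  ∑ i, ∑ j ∈ G.neighborFinset i, (Fintype.card V - (G.degree i + G.degree j) : ℝ) *
    (x i ^ 2 / G.degree i + x j ^ 2 / G.degree j)

variable {G}

theorem SimpleGraph.CliqueFree.degreeSumDefect_nonneg (h3 : G.CliqueFree 3) (x : V → ℝ) :
    0 ≤ degreeSumDefect G x :=
  sum_nonneg fun _ _ => sum_nonneg fun _ hj =>
    h3.card_sub_degree_add_mul_nonneg x ((mem_neighborFinset _ _ _).mp hj)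

end Defect

section SignlessLaplacian

variable (G : SimpleGraph V) [Fintype V] [DecidableEq V] [DecidableRel G.Adj]

theorem signlessLap_mulVec_apply (x : V → ℝ) (i : V) :
    (signlessLap G *ᵥ x) i = G.degree i * x i + ∑ j ∈ G.neighborFinset i, x j := by
  simp [signlessLap, add_mulVec, mulVec_diagonal, adjMatrix_mulVec_apply]

theorem dotProduct_signlessLap_mulVec_s19 (x : V → ℝ) :
    x ⬝ᵥ (signlessLap G *ᵥ x) = (∑ i, ∑ j ∈ G.neighborFinset i, (x i + x j) ^ 2) / 2 := by
  have h : x ⬝ᵥ (signlessLap G *ᵥ x) = ∑ i, ∑ j ∈ G.neighborFinset i, (x i ^ 2 + x i * x j) := by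
    simp only [dotProduct, signlessLap_mulVec_apply, mul_add, mul_sum, sum_add_distrib, sum_const,
      card_neighborFinset_eq_degree, nsmul_eq_mul]
    exact congrArg₂ _ (sum_congr rfl fun i _ => by ring) rfl
  rw [eq_div_iff two_ne_zero, h, mul_two]
  nth_rw 2 [sum_neighborFinset_comm]
  rw [← sum_add_distrib]
  refine sum_congr rfl fun i _ => ?_
  rw [← sum_add_distrib]
  exact sum_congr rfl fun j _ => by ring

theorem dotProduct_signlessLap_mulVec_add_degreeSumDefect_le (x : V → ℝ) :
    x ⬝ᵥ (signlessLap G *ᵥ x) + degreeSumDefect G x / 2 ≤ Fintype.card V * (x ⬝ᵥ x) := by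
  have hcs : x ⬝ᵥ (signlessLap G *ᵥ x) ≤ (∑ i, ∑ j ∈ G.neighborFinset i,
      (G.degree i + G.degree j : ℝ) * (x i ^ 2 / G.degree i + x j ^ 2 / G.degree j)) / 2 := by
    rw [dotProduct_signlessLap_mulVec_s19]
    gcongr with i _ j hj
    rw [mem_neighborFinset] at hj
    have hdi : 0 < G.degree i := G.degree_pos_iff_exists_adj i |>.mpr ⟨j, hj⟩
    have hdj : 0 < G.degree j := G.degree_pos_iff_exists_adj j |>.mpr ⟨i, hj.symm⟩
    exact sq_add_le_mul_add_div (Nat.cast_pos.mpr hdi) (Nat.cast_pos.mpr hdj)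
  have hw := mul_le_mul_of_nonneg_left (sum_neighborFinset_sq_div_degree_le G x)
    (Nat.cast_nonneg (α := ℝ) (Fintype.card V))
  simp only [degreeSumDefect, sub_mul, sum_sub_distrib, mul_sum] at hw ⊢
  linarith

theorem exists_adj_of_signlessLap_mulVec_eq_smul {x : V → ℝ} {μ : ℝ}
    (hx : signlessLap G *ᵥ x = μ • x) (hμ : μ ≠ 0) {u : V} (hxu : x u ≠ 0) : ∃ v, G.Adj u v := by
  by_contra! h
  have hN : G.neighborFinset u = ∅ := by ext; simp [h]
  have hd : G.degree u = 0 := by rw [← card_neighborFinset_eq_degree, hN, card_empty]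
  exact hxu (by simpa [signlessLap_mulVec_apply, hN, hd, eq_comm, hμ] using congrFun hx u)

theorem signlessLap_mulVec_eq_card_smul_of_adj_iff (s : Finset V)
    (hadj : ∀ u v : V, G.Adj u v ↔ ((u ∈ s ∧ v ∉ s) ∨ (u ∉ s ∧ v ∈ s))) :
    signlessLap G *ᵥ (fun v => if v ∈ s then (#sᶜ : ℝ) else #s) =
      (Fintype.card V : ℝ) • fun v => if v ∈ s then (#sᶜ : ℝ) else #s := by
  have hcard : (#s + #sᶜ : ℝ) = Fintype.card V := by exact_mod_cast s.card_add_card_compl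
  ext v
  have hN : G.neighborFinset v = if v ∈ s then sᶜ else s := by
    ext w
    by_cases hv : v ∈ s <;> simp [hadj, hv]
  rw [signlessLap_mulVec_apply, ← card_neighborFinset_eq_degree, hN, ← hcard]
  by_cases hv : v ∈ s
  · rw [if_pos hv, sum_ite_of_false fun w hw => mem_compl.mp hw]
    simp only [hv, ↓reduceIte, sum_const, nsmul_eq_mul, Pi.smul_apply, smul_eq_mul]
    ring
  · rw [if_neg hv, sum_ite_of_true fun w hw => hw]
    simp only [hv, ↓reduceIte, sum_const, nsmul_eq_mul, Pi.smul_apply, smul_eq_mul]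
    ring

theorem isGreatest_spectrum_qIndex [Nonempty V] :
    IsGreatest (spectrum ℝ (signlessLap G)) (qIndex G) := by
  have hA := signlessLap_isHermitian G
  rw [hA.spectrum_real_eq_range_eigenvalues]
  obtain ⟨i, hi⟩ := Finite.exists_max hA.eigenvalues
  have hq : qIndex G = hA.eigenvalues i :=
    le_antisymm (ciSup_le hi) (le_ciSup (Set.finite_range _).bddAbove i)
  rw [hq]
  exact ⟨⟨i, rfl⟩, by rintro _ ⟨j, rfl⟩; exact hi j⟩

variable {G}

theorem SimpleGraph.CliqueFree.eigenvalue_le_card (h3 : G.CliqueFree 3) {x : V → ℝ} {μ : ℝ}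
    (hx0 : x ≠ 0) (hx : signlessLap G *ᵥ x = μ • x) : μ ≤ Fintype.card V := by
  have hle := dotProduct_signlessLap_mulVec_add_degreeSumDefect_le G x
  have hpos : 0 < x ⬝ᵥ x := by simpa using dotProduct_star_self_pos_iff.mpr hx0
  rw [hx, dotProduct_smul, smul_eq_mul] at hle
  exact le_of_mul_le_mul_right (by linarith [h3.degreeSumDefect_nonneg x]) hpos

theorem SimpleGraph.CliqueFree.degree_add_degree_eq_card (h3 : G.CliqueFree 3) {x : V → ℝ}
    (hx : signlessLap G *ᵥ x = (Fintype.card V : ℝ) • x) {u v : V} (huv : G.Adj u v)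
    (hxu : x u ≠ 0) : G.degree u + G.degree v = Fintype.card V := by
  have hle := dotProduct_signlessLap_mulVec_add_degreeSumDefect_le G x
  rw [hx, dotProduct_smul, smul_eq_mul] at hle
  have hzero : degreeSumDefect G x = 0 := le_antisymm (by linarith) (h3.degreeSumDefect_nonneg x)
  have hterm : ∀ i, ∀ j ∈ G.neighborFinset i, 0 ≤ (Fintype.card V - (G.degree i + G.degree j) : ℝ) *
      (x i ^ 2 / G.degree i + x j ^ 2 / G.degree j) := fun i j hj =>
    h3.card_sub_degree_add_mul_nonneg x ((mem_neighborFinset _ _ _).mp hj)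
  rw [degreeSumDefect, sum_eq_zero_iff_of_nonneg fun i _ => sum_nonneg (hterm i)] at hzero
  have huv0 := (sum_eq_zero_iff_of_nonneg (hterm u)).mp (hzero u (mem_univ u)) v
    ((mem_neighborFinset _ _ _).mpr huv)
  have hdu : (0 : ℝ) < G.degree u :=
    Nat.cast_pos.mpr (G.degree_pos_iff_exists_adj u |>.mpr ⟨v, huv⟩)
  have hw : 0 < x u ^ 2 / G.degree u + x v ^ 2 / G.degree v := by positivity
  rw [mul_eq_zero, or_iff_left hw.ne', sub_eq_zero] at huv0
  exact_mod_cast huv0.symm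

end SignlessLaplacian

theorem stmt19 (G : SimpleGraph V) [Fintype V] [DecidableEq V] [DecidableRel G.Adj]
    (hn : 2 ≤ Fintype.card V) (h3 : G.CliqueFree 3) :
    qIndex G = (Fintype.card V : ℝ) ↔
      ∃ s : Finset V, s.Nonempty ∧ sᶜ.Nonempty ∧
        ∀ u v : V, G.Adj u v ↔ ((u ∈ s ∧ v ∉ s) ∨ (u ∉ s ∧ v ∈ s)) := by
  have : Nonempty V := Fintype.card_pos_iff.mp (by omega)
  have hspec := isGreatest_spectrum_qIndex G
  have hq_le : qIndex G ≤ Fintype.card V := by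
    obtain ⟨x, hx0, hx⟩ := mem_spectrum_iff_exists_mulVec_eq_smul.mp hspec.1
    exact h3.eigenvalue_le_card hx0 hx
  constructor
  · intro hq
    obtain ⟨x, hx0, hx⟩ := mem_spectrum_iff_exists_mulVec_eq_smul.mp (hq ▸ hspec.1)
    obtain ⟨u, hxu⟩ := Function.ne_iff.mp hx0
    obtain ⟨v, huv⟩ :=
      exists_adj_of_signlessLap_mulVec_eq_smul G hx (Nat.cast_ne_zero.mpr (by omega)) hxu
    exact h3.exists_completeBipartite huv fun w huw => h3.degree_add_degree_eq_card hx huw hxu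
  · rintro ⟨s, ⟨a, ha⟩, hsc, hadj⟩
    refine le_antisymm hq_le (hspec.2 (mem_spectrum_iff_exists_mulVec_eq_smul.mpr
      ⟨_, Function.ne_iff.mpr ⟨a, ?_⟩, signlessLap_mulVec_eq_card_smul_of_adj_iff G s hadj⟩))
    simpa [ha] using hsc.card_pos.ne'
end
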